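/- arXiv:2101.00103 — 3 statements merged into one kernel-verified Lean document; each statement's English description precedes it below -/
import Mathlib

section
/- For k ≥ 1, U^k(ℤ_{2^{2k+1}}) ≅ ℤ_2 × ℤ_2; in particular it is a boolean ring (every element is idempotent under the induced multiplication). -/
/-- Cyclic factors of the group of units of `ZMod (p^a)` (Lemma int1). -/
noncomputable def pUnitsList (p a : ℕ) : List ℕ :=
  if p = 2 then (if 2 ≤ a then [2, 2 ^ (a - 2)] else [1]) else [p - 1, p ^ (a - 1)]

/-- Cyclic factors of `U(ZMod n)`, via the prime-power factorization of `n`. -/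
noncomputable def unitsList (n : ℕ) : List ℕ :=
  (Nat.factorization n).support.toList.flatMap fun p => pUnitsList p (Nat.factorization n p)

/-- One application of the units functor to a product of cyclic rings. -/
noncomputable def uStep (l : List ℕ) : List ℕ := l.flatMap unitsList

/-- Cyclic factors of the k-th iterated group of units `U^k(ZMod n)`. -/
noncomputable def UkList (k n : ℕ) : List ℕ := uStep^[k] [n]

/-- The k-th iterated group of units `U^k(ZMod n)`, as the product of its cyclic factors. -/
abbrev Uk (k n : ℕ) : Type := ∀ i : Fin (UkList k n).length, ZMod ((UkList k n).get i)

lemma unitsList_one : unitsList 1 = [] := by simp [unitsList]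

lemma unitsList_two_pow (a : ℕ) (ha : 1 ≤ a) : unitsList (2 ^ a) = pUnitsList 2 a := by
  unfold unitsList
  rw [Nat.Prime.factorization_pow Nat.prime_two,
    Finsupp.support_single_ne_zero 2 (by omega)]
  simp

lemma unitsList_two : unitsList 2 = [1] := by
  have := unitsList_two_pow 1 le_rfl
  simpa [pUnitsList] using this

lemma unitsList_two_pow' (a : ℕ) (ha : 2 ≤ a) : unitsList (2 ^ a) = [2, 2 ^ (a - 2)] := by
  rw [unitsList_two_pow a (by omega)]
  simp [pUnitsList, ha]

lemma keyA (m : ℕ) : uStep^[m] [1, 2, 2 ^ (2 * m + 1)] = [1, 2, 2] := by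
  induction m with
  | zero => norm_num
  | succ n ih =>
    rw [Function.iterate_succ_apply]
    have hs : uStep [1, 2, 2 ^ (2 * (n + 1) + 1)] = [1, 2, 2 ^ (2 * n + 1)] := by
      rw [show 2 * (n + 1) + 1 = 2 * n + 3 from by ring]
      simp [uStep, unitsList_one, unitsList_two, unitsList_two_pow' (2 * n + 3) (by omega)]
    rw [hs, ih]
    
lemma keyB (k : ℕ) (hk : 1 ≤ k) :
    UkList k (2 ^ (2 * k + 1)) = [2, 2] ∨ UkList k (2 ^ (2 * k + 1)) = [1, 2, 2] := by
  unfold UkList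
  rcases Nat.lt_or_ge k 2 with h | h
  · left
    interval_cases k
    rw [Function.iterate_one]
    have h8 : unitsList 8 = [2, 2] := by
      rw [show (8 : ℕ) = 2 ^ 3 from by norm_num, unitsList_two_pow' 3 (by omega)]; norm_num
    simp [uStep, h8]
  · right
    obtain ⟨m, rfl⟩ : ∃ m, k = m + 2 := ⟨k - 2, by omega⟩
    have h1 : uStep [2 ^ (2 * (m + 2) + 1)] = [2, 2 ^ (2 * m + 3)] := by
      rw [show 2 * (m + 2) + 1 = 2 * m + 5 from by ring]
      simp [uStep, unitsList_two_pow' (2 * m + 5) (by omega)]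
    have h2 : uStep [2, 2 ^ (2 * m + 3)] = [1, 2, 2 ^ (2 * m + 1)] := by
      simp [uStep, unitsList_two, unitsList_two_pow' (2 * m + 3) (by omega)]
    rw [show m + 2 = (m + 1) + 1 from rfl, Function.iterate_succ_apply, h1,
      Function.iterate_succ_apply, h2]
    exact keyA m

noncomputable def e2 : (∀ i : Fin ([2, 2] : List ℕ).length, ZMod (([2, 2] : List ℕ).get i)) ≃+
    ZMod 2 × ZMod 2 where
  toFun x := (x ⟨0, by decide⟩, x ⟨1, by decide⟩)
  invFun p := fun i => match i with
    | ⟨0, _⟩ => p.1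
    | ⟨1, _⟩ => p.2
  left_inv x := by
    funext i
    fin_cases i <;> rfl
  right_inv p := rfl
  map_add' x y := rfl

noncomputable def e3 : (∀ i : Fin ([1, 2, 2] : List ℕ).length, ZMod (([1, 2, 2] : List ℕ).get i)) ≃+
    ZMod 2 × ZMod 2 where
  toFun x := (x ⟨1, by decide⟩, x ⟨2, by decide⟩)
  invFun p := fun i => match i with
    | ⟨0, _⟩ => (0 : ZMod 1)
    | ⟨1, _⟩ => p.1
    | ⟨2, _⟩ => p.2
  left_inv x := by
    funext i
    fin_cases i
    · exact @Subsingleton.elim (ZMod 1) _ _ _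
    · rfl
    · rfl
  right_inv p := rfl
  map_add' x y := rfl

theorem stmt_5 (k : ℕ) (hk : 1 ≤ k) :
    Nonempty (Uk k (2 ^ (2 * k + 1)) ≃+ ZMod 2 × ZMod 2) ∧
    (∀ x : Uk k (2 ^ (2 * k + 1)), x + x = 0) := by
  unfold Uk
  rcases keyB k hk with h | h <;> rw [h]
  · refine ⟨⟨e2⟩, fun x => ?_⟩
    funext i
    fin_cases i <;> exact (by decide : ∀ a : ZMod 2, a + a = 0) _
  · refine ⟨⟨e3⟩, fun x => ?_⟩
    funext i
    fin_cases i
    · exact @Subsingleton.elim (ZMod 1) _ _ _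
    · exact (by decide : ∀ a : ZMod 2, a + a = 0) _
    · exact (by decide : ∀ a : ZMod 2, a + a = 0) _
end

section
/- Let p be an odd prime, and let t satisfy 0 ≤ t < α and 1 ≤ t ≤ k. Then U^k(ℤ_{p^α}) ≅ U^k(ℤ_p) × U^{k-1}(ℤ_p) × ⋯ × U^{k-t+1}(ℤ_p) × U^{k-t}(ℤ_{p^{α-t}}). -/
/-!
For odd `p`, `U(ℤ_{p^(a+1)}) ≅ ℤ_{p-1} × ℤ_{p^a}` and `U(ℤ_p) ≅ ℤ_{p-1} × ℤ_1`. Since `U` acts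
factorwise on products of cyclic rings, `U^(k+1)(ℤ_{p^(a+1)}) ≅ U^k(ℤ_{p-1}) × U^k(ℤ_{p^a})`, and
`U^(k+1)(ℤ_p) ≅ U^k(ℤ_{p-1})` because the factor `U^k(ℤ_1)` is trivial. Hence
`U^(k+1)(ℤ_{p^(a+1)}) ≅ U^(k+1)(ℤ_p) × U^k(ℤ_{p^a})`; applying this `t` times peels off the
factors `U^k(ℤ_p), …, U^(k-t+1)(ℤ_p)`.
-/

abbrev CyclicProd (l : List ℕ) : Type := ∀ i : Fin l.length, ZMod (l.get i)

namespace CyclicProd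

abbrev uniqueOfForallEqOne {l : List ℕ} (h : ∀ x ∈ l, x = 1) : Unique (CyclicProd l) :=
  haveI : ∀ i, Subsingleton (ZMod (l.get i)) := fun i =>
    ZMod.subsingleton_iff.2 (h _ (List.get_mem l i))
  uniqueOfSubsingleton 0

instance : Unique (CyclicProd []) := uniqueOfForallEqOne (by simp)

def consEquiv (a : ℕ) (l : List ℕ) : CyclicProd (a :: l) ≃+ ZMod a × CyclicProd l :=
  (Fin.consLinearEquiv ℕ fun i => ZMod ((a :: l).get i)).toAddEquiv.symm

def appendEquiv : (l₁ l₂ : List ℕ) → CyclicProd (l₁ ++ l₂) ≃+ CyclicProd l₁ × CyclicProd l₂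
  | [], _ => AddEquiv.uniqueProd.symm
  | a :: l₁, l₂ =>
    (consEquiv a (l₁ ++ l₂)).trans <|
      ((AddEquiv.refl _).prodCongr (appendEquiv l₁ l₂)).trans <|
      AddEquiv.prodAssoc.symm.trans ((consEquiv a l₁).symm.prodCongr (AddEquiv.refl _))

end CyclicProd

lemma unitsList_prime_pow {p a : ℕ} (hp : p.Prime) (h2 : p ≠ 2) (ha : a ≠ 0) :
    unitsList (p ^ a) = [p - 1, p ^ (a - 1)] := by
  rw [unitsList, hp.factorization_pow, Finsupp.support_single _ ha]
  simp [pUnitsList, h2]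

lemma uStep_append (l₁ l₂ : List ℕ) : uStep (l₁ ++ l₂) = uStep l₁ ++ uStep l₂ :=
  List.flatMap_append ..

lemma uStep_iterate_append (k : ℕ) (l₁ l₂ : List ℕ) :
    uStep^[k] (l₁ ++ l₂) = uStep^[k] l₁ ++ uStep^[k] l₂ := by
  induction k generalizing l₁ l₂ with
  | zero => rfl
  | succ k ih => simp only [Function.iterate_succ_apply, uStep_append, ih]

lemma UkList_succ (k n : ℕ) : UkList (k + 1) n = uStep^[k] (unitsList n) := by
  simp [UkList, uStep]

lemma eq_one_of_mem_UkList_one {k x : ℕ} (hx : x ∈ UkList k 1) : x = 1 := by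
  cases k with
  | zero => simpa [UkList] using hx
  | succ k =>
    have hnil : UkList (k + 1) 1 = [] := by
      rw [UkList_succ, show unitsList 1 = [] by simp [unitsList]]
      exact Function.iterate_fixed rfl k
    simp [hnil] at hx

lemma UkList_succ_prime_pow_succ {p : ℕ} (hp : p.Prime) (h2 : p ≠ 2) (k a : ℕ) :
    UkList (k + 1) (p ^ (a + 1)) = UkList k (p - 1) ++ UkList k (p ^ a) := by
  rw [UkList_succ, unitsList_prime_pow hp h2 a.add_one_ne_zero, Nat.add_sub_cancel,
    show [p - 1, p ^ a] = [p - 1] ++ [p ^ a] from rfl, uStep_iterate_append]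
  rfl

namespace Uk

noncomputable instance (k : ℕ) : Unique (Uk k 1) :=
  CyclicProd.uniqueOfForallEqOne fun _ => eq_one_of_mem_UkList_one

variable {p : ℕ} (hp : p.Prime) (h2 : p ≠ 2)

noncomputable def congr {k k' n n' : ℕ} (hk : k = k') (hn : n = n') : Uk k n ≃+ Uk k' n' :=
  AddEquiv.cast (M := CyclicProd) (by rw [hk, hn])

include hp h2

noncomputable def succPrimePowSuccEquiv (k a : ℕ) :
    Uk (k + 1) (p ^ (a + 1)) ≃+ Uk k (p - 1) × Uk k (p ^ a) :=
  (AddEquiv.cast (M := CyclicProd) (UkList_succ_prime_pow_succ hp h2 k a)).trans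
    (CyclicProd.appendEquiv _ _)

noncomputable def succPrimeEquiv (k : ℕ) : Uk (k + 1) p ≃+ Uk k (p - 1) :=
  (congr rfl (pow_one p).symm).trans <| (succPrimePowSuccEquiv hp h2 k 0).trans <|
    ((AddEquiv.refl _).prodCongr (congr rfl (pow_zero p))).trans AddEquiv.prodUnique

noncomputable def primePowSuccEquiv (k a : ℕ) :
    Uk (k + 1) (p ^ (a + 1)) ≃+ Uk (k + 1) p × Uk k (p ^ a) :=
  (succPrimePowSuccEquiv hp h2 k a).trans
    ((succPrimeEquiv hp h2 k).symm.prodCongr (AddEquiv.refl _))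

noncomputable def primePowEquiv : (t k α : ℕ) → t ≤ k → t ≤ α →
    Uk k (p ^ α) ≃+ (∀ j : Fin t, Uk (k - j) p) × Uk (k - t) (p ^ (α - t))
  | 0, _, _, _, _ => AddEquiv.uniqueProd.symm
  | t + 1, k + 1, α + 1, htk, htα =>
    let peel : Uk (k + 1) p × (∀ j : Fin t, Uk (k - j) p) ≃+
        ∀ j : Fin (t + 1), Uk (k + 1 - j) p :=
      ((congr (by simp) rfl).prodCongr
        (AddEquiv.piCongrRight fun j => congr (by simp [Fin.val_succ]) rfl)).trans
      (Fin.consLinearEquiv ℕ fun j : Fin (t + 1) => Uk (k + 1 - j) p).toAddEquiv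
    (primePowSuccEquiv hp h2 k α).trans <|
      ((AddEquiv.refl _).prodCongr
        (primePowEquiv t k α (by omega) (by omega))).trans <|
      AddEquiv.prodAssoc.symm.trans (peel.prodCongr (congr (by omega) (by simp)))

end Uk

theorem stmt_7_general (p α k t : ℕ) (hp : p.Prime) (hodd : Odd p)
    (ht1 : t < α) (ht3 : t ≤ k) :
    Nonempty (Uk k (p ^ α) ≃+ (∀ j : Fin t, Uk (k - j) p) × Uk (k - t) (p ^ (α - t))) :=
  ⟨Uk.primePowEquiv hp (hodd.ne_two_of_dvd_nat dvd_rfl) t k α ht3 ht1.le⟩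

theorem stmt_7 (p α k t : ℕ) (hp : p.Prime) (hodd : Odd p)
    (ht1 : t < α) (ht2 : 1 ≤ t) (ht3 : t ≤ k) :
    Nonempty (Uk k (p ^ α) ≃+ (∀ j : Fin t, Uk (k - j) p) × Uk (k - t) (p ^ (α - t))) :=
  stmt_7_general p α k t hp hodd ht1 ht3
end

section
/- Let p be an odd prime. If U^k(ℤ_{p^α}) is trivial (with α ≥ 1, k ≥ 1), then α < k. -/
lemma unitsList_pow (p β : ℕ) (hp : p.Prime) (h2 : p ≠ 2) (hβ : 1 ≤ β) :
    unitsList (p ^ β) = [p - 1, p ^ (β - 1)] := by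
  unfold unitsList
  rw [Nat.Prime.factorization_pow hp]
  rw [Finsupp.support_single_ne_zero _ (by omega)]
  simp [pUnitsList, h2]

lemma mem_UkList (p α : ℕ) (hp : p.Prime) (h2 : p ≠ 2) :
    ∀ k, 1 ≤ k → k ≤ α →
      (p - 1) ∈ UkList k (p ^ α) ∧ p ^ (α - k) ∈ UkList k (p ^ α) := by
  intro k
  induction k with
  | zero => omega
  | succ k ih =>
    intro _ hkα
    rcases Nat.eq_zero_or_pos k with hk0 | hk0
    · subst hk0
      have : UkList 1 (p ^ α) = unitsList (p ^ α) := by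
        simp [UkList, uStep]
      rw [this, unitsList_pow p α hp h2 (by omega)]
      simp
    · obtain ⟨_, hm⟩ := ih hk0 (by omega)
      have hsucc : UkList (k + 1) (p ^ α) = uStep (UkList k (p ^ α)) := by
        simp [UkList, Function.iterate_succ_apply']
      have hsub : unitsList (p ^ (α - k)) ⊆ UkList (k + 1) (p ^ α) := by
        rw [hsucc]
        intro x hx
        exact List.mem_flatMap.2 ⟨_, hm, hx⟩
      rw [unitsList_pow p (α - k) hp h2 (by omega)] at hsub
      have h1 : α - k - 1 = α - (k + 1) := by omega
      constructor
      · exact hsub (by simp)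
      · rw [← h1]; exact hsub (by simp)

theorem stmt_16 (p α k : ℕ) (hp : p.Prime) (hodd : Odd p) (hα : 1 ≤ α) (hk : 1 ≤ k)
    (htriv : Subsingleton (Uk k (p ^ α))) : α < k := by
  by_contra hcon
  have hkα : k ≤ α := by omega
  have h2 : p ≠ 2 := by rintro rfl; exact (Nat.not_odd_iff_even.2 (by decide)) hodd
  have hp3 : 3 ≤ p := by
    rcases hp.two_le.lt_or_eq with h | h
    · omega
    · omega
  obtain ⟨hmem, -⟩ := mem_UkList p α hp h2 k hk hkα
  obtain ⟨i, hi⟩ := List.mem_iff_get.1 hmem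
  have hnt : Nontrivial (ZMod ((UkList k (p ^ α)).get i)) := by
    rw [hi]
    haveI : Fact (1 < p - 1) := ⟨by omega⟩
    infer_instance
  obtain ⟨a, b, hab⟩ := hnt.exists_pair_ne
  classical
  have := htriv.elim (Function.update (fun j => (0 : ZMod ((UkList k (p ^ α)).get j))) i a)
    (Function.update (fun j => (0 : ZMod ((UkList k (p ^ α)).get j))) i b)
  have := congrFun this i
  simp [Function.update_self] at this
  exact hab this
end
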